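/- In ℤ⟨X₅⟩ (the free unital associative ring on x₁,...,x₅), let W₁ be the additive subgroup generated by all products x_{i₁}·[x_{i₂},x_{i₃},x_{i₄},x_{i₅}] and W₂ the additive subgroup generated by all [x_{i₁},x_{i₂},x_{i₃},x_{i₄},x_{i₅}] and [x_{i₁},x_{i₂},x_{i₃}]·[x_{i₄},x_{i₅}], where (i₁,...,i₅) ranges over permutations of (1,...,5). Then W₁ ∩ W₂ = 0. -/

import Mathlib

noncomputable section

/-- `ℤ⟨X₅⟩`, the free unital associative ring on `{x₁,…,x₅}` (indexed by `Fin 5`). -/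
abbrev R5 : Type := FreeAlgebra ℤ (Fin 5)

/-- The commutator `[a,b] = ab - ba`. -/
def br (a b : R5) : R5 := a * b - b * a

/-- The free generators `x₁,…,x₅` (as `x 0, …, x 4`). -/
def x (i : Fin 5) : R5 := FreeAlgebra.ι ℤ i

/-- `W₁`: the additive subgroup generated by all `x_{i₁}[x_{i₂},x_{i₃},x_{i₄},x_{i₅}]`. -/
def W1 : AddSubgroup R5 := AddSubgroup.closure
  {y | ∃ σ : Equiv.Perm (Fin 5),
      y = x (σ 0) * br (br (br (x (σ 1)) (x (σ 2))) (x (σ 3))) (x (σ 4))}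

/-- `W₂`: the additive subgroup generated by all `[x_{i₁},x_{i₂},x_{i₃},x_{i₄},x_{i₅}]`
and `[x_{i₁},x_{i₂},x_{i₃}][x_{i₄},x_{i₅}]`. -/
def W2 : AddSubgroup R5 := AddSubgroup.closure
  ({y | ∃ σ : Equiv.Perm (Fin 5),
      y = br (br (br (br (x (σ 0)) (x (σ 1))) (x (σ 2))) (x (σ 3))) (x (σ 4))} ∪
   {y | ∃ σ : Equiv.Perm (Fin 5),
      y = br (br (x (σ 0)) (x (σ 1))) (x (σ 2)) * br (x (σ 3)) (x (σ 4))})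

/-!
Let `∂ᵢ` be the derivation of `ℤ⟨X₅⟩` with `∂ᵢ xⱼ = δᵢⱼ` and `E = ∑ᵢ xᵢ ∂ᵢ`. Since `∂ᵢ` takes
scalar, hence central, values on the generators, it kills every commutator `[a, b]` of elements on
which it is central; so it kills all commutators `[x_{i₁}, …, x_{iₖ}]` with `k ≥ 2` and their
products. Consequently `E (xⱼ u) = xⱼ u`, `E u = 0` and `E (u v) = 0` for such commutators `u`, `v`:
`E` is the identity on `W₁` and vanishes on `W₂`, so `W₁ ∩ W₂ = 0`.
-/

namespace FreeAlgebra

variable {R : Type*} [CommRing R] {X : Type*} [DecidableEq X]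

/-- The derivation `∂ᵢ` with `∂ᵢ xⱼ = δᵢⱼ` is the second component of this algebra map into the
trivial square-zero extension, so that the Leibniz rule is its multiplicativity. -/
def pderivHom (i : X) :
    FreeAlgebra R X →ₐ[R] TrivSqZeroExt (FreeAlgebra R X) (FreeAlgebra R X) :=
  lift R fun j =>
    TrivSqZeroExt.inl (ι R j) + TrivSqZeroExt.inr (if j = i then (1 : FreeAlgebra R X) else 0)

def pderiv (i : X) : FreeAlgebra R X →ₗ[R] FreeAlgebra R X :=
  ((TrivSqZeroExt.sndHom _ _).restrictScalars R) ∘ₗ (pderivHom i).toLinearMap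

theorem fst_pderivHom (i : X) (f : FreeAlgebra R X) : (pderivHom i f).fst = f := by
  suffices (TrivSqZeroExt.fstHom R _ _).comp (pderivHom (R := R) i) = AlgHom.id R _ from
    AlgHom.congr_fun this f
  ext j
  simp [pderivHom, apply_ite TrivSqZeroExt.fst]

theorem pderiv_ι (i j : X) : pderiv i (ι R j) = if j = i then 1 else 0 := by
  simp [pderiv, pderivHom, apply_ite TrivSqZeroExt.snd]

theorem pderiv_mul (i : X) (a b : FreeAlgebra R X) :
    pderiv i (a * b) = pderiv i a * b + a * pderiv i b := by
  simp [pderiv, TrivSqZeroExt.snd_mul, fst_pderivHom, add_comm]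

theorem pderiv_ι_mem_center (i j : X) :
    pderiv i (ι R j) ∈ Subalgebra.center R (FreeAlgebra R X) := by
  rw [pderiv_ι]
  split_ifs
  exacts [one_mem _, zero_mem _]

theorem pderiv_lie_eq_zero {i : X} {a b : FreeAlgebra R X}
    (ha : pderiv i a ∈ Subalgebra.center R _) (hb : pderiv i b ∈ Subalgebra.center R _) :
    pderiv i ⁅a, b⁆ = 0 := by
  rw [Subalgebra.mem_center_iff] at ha hb
  rw [Ring.lie_def, map_sub, pderiv_mul, pderiv_mul, ha, hb]
  abel

/-- On a word, the sum of the words obtained by moving one of its letters to the front. -/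
def leftEuler [Fintype X] : FreeAlgebra R X →ₗ[R] FreeAlgebra R X :=
  ∑ i, LinearMap.mulLeft R (ι R i) ∘ₗ pderiv i

variable [Fintype X]

theorem leftEuler_apply (f : FreeAlgebra R X) : leftEuler f = ∑ i, ι R i * pderiv i f := by
  simp [leftEuler]

theorem leftEuler_eq_zero {u : FreeAlgebra R X} (hu : ∀ i, pderiv i u = 0) :
    leftEuler u = 0 := by
  simp [leftEuler_apply, hu]

theorem leftEuler_ι_mul (j : X) {u : FreeAlgebra R X} (hu : ∀ i, pderiv i u = 0) :
    leftEuler (ι R j * u) = ι R j * u := by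
  simp [leftEuler_apply, pderiv_mul, hu, pderiv_ι]

end FreeAlgebra

open FreeAlgebra

theorem br_eq_lie (a b : R5) : br a b = ⁅a, b⁆ :=
  (Ring.lie_def a b).symm

theorem pderiv_br_x_x (i a b : Fin 5) : pderiv i (br (x a) (x b)) = 0 := by
  rw [br_eq_lie]
  exact pderiv_lie_eq_zero (pderiv_ι_mem_center i a) (pderiv_ι_mem_center i b)

theorem pderiv_br_x_of_eq_zero {i : Fin 5} {u : R5} (hu : pderiv i u = 0) (a : Fin 5) :
    pderiv i (br u (x a)) = 0 := by
  rw [br_eq_lie]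
  exact pderiv_lie_eq_zero (hu ▸ zero_mem _) (pderiv_ι_mem_center i a)

theorem pderiv_br_br_br (i a b c d : Fin 5) :
    pderiv i (br (br (br (x a) (x b)) (x c)) (x d)) = 0 :=
  pderiv_br_x_of_eq_zero (pderiv_br_x_of_eq_zero (pderiv_br_x_x i a b) c) d

theorem leftEuler_eq_self_of_mem_W1 {a : R5} (ha : a ∈ W1) : leftEuler a = a := by
  suffices W1 ≤ (LinearMap.eqLocus leftEuler LinearMap.id).toAddSubgroup from this ha
  refine (AddSubgroup.closure_le _).2 ?_
  rintro _ ⟨σ, rfl⟩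
  exact leftEuler_ι_mul _ fun i => pderiv_br_br_br i _ _ _ _

theorem leftEuler_eq_zero_of_mem_W2 {a : R5} (ha : a ∈ W2) : leftEuler a = 0 := by
  suffices W2 ≤ (LinearMap.ker leftEuler).toAddSubgroup from this ha
  refine (AddSubgroup.closure_le _).2 ?_
  rintro _ (⟨σ, rfl⟩ | ⟨σ, rfl⟩) <;> refine leftEuler_eq_zero fun i => ?_
  · exact pderiv_br_x_of_eq_zero (pderiv_br_br_br i _ _ _ _) _
  · rw [pderiv_mul, pderiv_br_x_of_eq_zero (pderiv_br_x_x i _ _), pderiv_br_x_x, zero_mul,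
      mul_zero, add_zero]

/-- `W₁ ∩ W₂ = 0`. -/
theorem stmt10 : W1 ⊓ W2 = ⊥ := by
  refine eq_bot_iff.2 fun a ha => ?_
  rw [AddSubgroup.mem_bot, ← leftEuler_eq_self_of_mem_W1 ha.1, leftEuler_eq_zero_of_mem_W2 ha.2]
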